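/- Let x ↦ ψ_x be an assignment of unit vectors in a d-dimensional complex Hilbert space to M classical values x ∈ {1,…,M}, and let (P_y)_{y=1}^{M} be a projective measurement. Then the average success probability (1/M)·∑_{x=1}^{M} ‖P_x ψ_x‖² is at most d/M. -/

import Mathlib

open scoped InnerProductSpace

/-- The trace of an endomorphism over an orthonormal basis. -/
lemma trace_eq_sum_inner' {V : Type*} [NormedAddCommGroup V] [InnerProductSpace ℂ V]
    [FiniteDimensional ℂ V] {ι : Type*} [Fintype ι] [DecidableEq ι]
    (b : OrthonormalBasis ι ℂ V) (f : V →ₗ[ℂ] V) :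
    LinearMap.trace ℂ V f = ∑ i, ⟪b i, f (b i)⟫_ℂ := by
  rw [LinearMap.trace_eq_matrix_trace ℂ b.toBasis f, Matrix.trace]
  congr 1
  ext i
  rw [Matrix.diag_apply, LinearMap.toMatrix_apply, b.coe_toBasis,
    b.coe_toBasis_repr_apply, b.repr_apply_apply]

lemma norm_sq_le_trace_re {V : Type*} [NormedAddCommGroup V] [InnerProductSpace ℂ V]
    [FiniteDimensional ℂ V] (P : V →ₗ[ℂ] V)
    (hidem : P ∘ₗ P = P) (hsymm : LinearMap.IsSymmetric P)
    (ψ : V) (hψ : ‖ψ‖ = 1) :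
    ‖P ψ‖ ^ 2 ≤ (LinearMap.trace ℂ V P).re := by
  classical
  have hinner : ∀ v : V, (⟪v, P v⟫_ℂ).re = ‖P v‖ ^ 2 := by
    intro v
    have h1 : P (P v) = P v := by rw [← LinearMap.comp_apply, hidem]
    have : ⟪v, P v⟫_ℂ = ⟪P v, P v⟫_ℂ := by
      conv_lhs => rw [← h1]
      exact (hsymm v (P v)).symm
    rw [this]
    simpa using inner_self_eq_norm_sq (𝕜 := ℂ) (P v)
  have horto : Orthonormal ℂ ((↑) : ({ψ} : Set V) → V) := by
    rw [orthonormal_subtype_iff_ite]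
    intro v hv w hw
    simp only [Set.mem_singleton_iff] at hv hw
    subst hv; subst hw
    simp [inner_self_eq_norm_sq_to_K, hψ]
  obtain ⟨u, b, hsub, hb⟩ := horto.exists_orthonormalBasis_extension
  have hmem : ψ ∈ u := hsub rfl
  rw [trace_eq_sum_inner' b, Complex.re_sum]
  have : ‖P ψ‖ ^ 2 = (⟪b ⟨ψ, hmem⟩, P (b ⟨ψ, hmem⟩)⟫_ℂ).re := by
    rw [hinner]; congr 2 <;> rw [hb]
  rw [this]
  refine Finset.single_le_sum (f := fun i => (⟪b i, P (b i)⟫_ℂ).re) (fun i _ => ?_) (Finset.mem_univ _)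
  rw [hinner]
  positivity

theorem stmt_14 {V : Type*} [NormedAddCommGroup V] [InnerProductSpace ℂ V]
    [FiniteDimensional ℂ V] (d M : ℕ) (hd : Module.finrank ℂ V = d) (hM : 0 < M)
    (ψ : Fin M → V) (hψ : ∀ x, ‖ψ x‖ = 1)
    (P : Fin M → V →ₗ[ℂ] V)
    (hidem : ∀ y, P y ∘ₗ P y = P y)
    (hsymm : ∀ y, LinearMap.IsSymmetric (P y))
    (horth : ∀ y y', y ≠ y' → P y ∘ₗ P y' = 0)
    (hsum : ∑ y, P y = LinearMap.id) :
    (1 / (M : ℝ)) * ∑ x, ‖P x (ψ x)‖ ^ 2 ≤ (d : ℝ) / M := by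
  have key : ∑ x, ‖P x (ψ x)‖ ^ 2 ≤ (d : ℝ) := by
    calc ∑ x, ‖P x (ψ x)‖ ^ 2
        ≤ ∑ x, (LinearMap.trace ℂ V (P x)).re :=
          Finset.sum_le_sum fun x _ =>
            norm_sq_le_trace_re (P x) (hidem x) (hsymm x) (ψ x) (hψ x)
      _ = (LinearMap.trace ℂ V (∑ y, P y)).re := by rw [map_sum, Complex.re_sum]
      _ = (d : ℝ) := by rw [hsum, LinearMap.trace_id, hd]; simp
  have hM' : (0:ℝ) < M := Nat.cast_pos.mpr hM
  rw [one_div, inv_mul_le_iff₀ hM', mul_comm, div_mul_cancel₀ _ hM'.ne']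
  exact key
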